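/- Let T : Fin L → α and T' : Fin L → β be sequences over linear orders with E(T) = E(T'), and let x : α, x' : β be characters such that (1) the number of distinct values of T strictly smaller than x equals the number of distinct values of T' strictly smaller than x', and (2) x occurs among the values of T if and only if x' occurs among the values of T'. Then E(x·T) = E(x'·T'), where x·T denotes the sequence of length L+1 whose first entry is x followed by the entries of T. In other words, the rank encoding of a string extended by one character to the left is determined by the rank encoding of the string together with the rank information of the new character among the string's values. -/

import Mathlib

/-!
The rank encoding of a sequence `s` records exactly its order type, i.e. the comparisons
`compare (s i) (s j)` for all pairs of positions. In a finite set of values, `u < a` iff `u` has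
fewer elements below it than `a`, and `u = a` iff moreover `a` lies in the set; so the number of
distinct earlier values below `s i`, together with whether `s i` occurred before, determines how
`s i` compares with every earlier entry, given how those compare among themselves. Inducting
along the sequence, equal rank encodings mean equal order types, and conversely. The same rank
argument, applied to `x` among all values of `T`, shows that `x` compares with every `T i` as `x'`
does with `T' i`; hence `x·T` and `x'·T'` have the same order type.
-/

/- The rank encoding `E(s)` of a sequence `s : Fin m → α` over a linear order:
`E(s)(i) = d_i + 1` if `s i` equals some earlier character, and `d_i + 1/2` otherwise,
where `d_i` is the number of distinct values among `s 0, …, s (i-1)` strictly smaller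
than `s i`. -/
open Classical in
noncomputable def rankEncode {m : ℕ} {α : Type*} [LinearOrder α] (s : Fin m → α) :
    Fin m → ℚ := fun i =>
  ((((Finset.univ : Finset (Fin m)).filter (fun j : Fin m => (j : ℕ) < (i : ℕ))).image s).filter
      (fun a => a < s i)).card +
    (if ∃ j : Fin m, (j : ℕ) < (i : ℕ) ∧ s j = s i then 1 else 1/2)

open Finset

theorem Finset.card_image_le_card_image_of_eq_imp_eq {ι α β : Type*} [DecidableEq α]
    [DecidableEq β] {A : Finset ι} {f : ι → α} {g : ι → β}
    (h : ∀ i ∈ A, ∀ j ∈ A, f i = f j → g i = g j) : #(A.image g) ≤ #(A.image f) := by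
  classical
  have hinj : Set.InjOn Prod.fst (A.image fun i => (f i, g i) : Set (α × β)) := by
    rintro _ hp _ hq hpq
    obtain ⟨i, hi, rfl⟩ := mem_image.1 hp
    obtain ⟨j, hj, rfl⟩ := mem_image.1 hq
    simpa [h i hi j hj hpq] using hpq
  calc #(A.image g) = #((A.image fun i => (f i, g i)).image Prod.snd) := by rw [image_image]; rfl
    _ ≤ #(A.image fun i => (f i, g i)) := card_image_le
    _ = #((A.image fun i => (f i, g i)).image Prod.fst) := (card_image_of_injOn hinj).symm
    _ = #(A.image f) := by rw [image_image]; rfl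

theorem Finset.card_image_eq_card_image_of_eq_iff_eq {ι α β : Type*} [DecidableEq α]
    [DecidableEq β] {A : Finset ι} {f : ι → α} {g : ι → β}
    (h : ∀ i ∈ A, ∀ j ∈ A, f i = f j ↔ g i = g j) : #(A.image f) = #(A.image g) :=
  le_antisymm (card_image_le_card_image_of_eq_imp_eq fun i hi j hj => (h i hi j hj).2)
    (card_image_le_card_image_of_eq_imp_eq fun i hi j hj => (h i hi j hj).1)

section LinearOrder

variable {ι α β : Type*} [LinearOrder α] [LinearOrder β]

theorem compare_eq_compare_of_iff {a b : α} {c d : β} (hlt : a < b ↔ c < d)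
    (heq : a = b ↔ c = d) : compare a b = compare c d := by
  rcases lt_trichotomy c d with h | h | h
  · rw [compare_lt_iff_lt.2 h, compare_lt_iff_lt]; exact hlt.2 h
  · rw [compare_eq_iff_eq.2 h, compare_eq_iff_eq]; exact heq.2 h
  · rw [compare_gt_iff_gt.2 h, compare_gt_iff_gt]
    exact lt_of_le_of_ne (not_lt.1 fun hab => (hlt.1 hab).asymm h)
      fun hba => h.ne' (heq.1 hba.symm)

theorem compare_eq_compare_of_forall_lt [LinearOrder ι] {A : Finset ι} {f : ι → α} {g : ι → β}
    (h : ∀ i ∈ A, ∀ j ∈ A, j < i → compare (f j) (f i) = compare (g j) (g i)) :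
    ∀ i ∈ A, ∀ j ∈ A, compare (f i) (f j) = compare (g i) (g j) := by
  intro i hi j hj
  rcases lt_trichotomy i j with hij | rfl | hji
  · exact h j hj i hi hij
  · simp
  · rw [Std.OrientedOrd.eq_swap (a := f i), h i hi j hj hji, ← Std.OrientedOrd.eq_swap]

theorem card_filter_lt_image_eq {A : Finset ι} {f : ι → α} {g : ι → β} {a : α} {b : β}
    (heq : ∀ i ∈ A, ∀ j ∈ A, f i = f j ↔ g i = g j) (hlt : ∀ i ∈ A, f i < a ↔ g i < b) :
    #((A.image f).filter (· < a)) = #((A.image g).filter (· < b)) := by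
  rw [filter_image, filter_image, filter_congr hlt]
  exact card_image_eq_card_image_of_eq_iff_eq fun i hi j hj =>
    heq i (mem_filter.1 hi).1 j (mem_filter.1 hj).1

theorem lt_iff_card_filter_lt_lt {B : Finset α} {u : α} (hu : u ∈ B) (a : α) :
    u < a ↔ #(B.filter (· < u)) < #(B.filter (· < a)) := by
  constructor
  · intro hua
    refine card_lt_card ⟨monotone_filter_right B fun _ _ hb => hb.trans hua, fun hsub => ?_⟩
    simpa using hsub (mem_filter.2 ⟨hu, hua⟩)
  · intro hcard
    by_contra! hau
    exact hcard.not_ge (card_le_card (monotone_filter_right B fun _ _ hb => hb.trans_le hau))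

theorem eq_iff_mem_and_card_filter_lt_eq {B : Finset α} {u : α} (hu : u ∈ B) (a : α) :
    u = a ↔ a ∈ B ∧ #(B.filter (· < u)) = #(B.filter (· < a)) := by
  constructor
  · rintro rfl
    exact ⟨hu, rfl⟩
  · rintro ⟨ha, hcard⟩
    by_contra! hne
    rcases hne.lt_or_gt with hua | hau
    · exact ((lt_iff_card_filter_lt_lt hu a).1 hua).ne hcard
    · exact ((lt_iff_card_filter_lt_lt ha u).1 hau).ne' hcard

theorem compare_eq_compare_of_card_filter_lt_eq {A : Finset ι} {f : ι → α} {g : ι → β}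
    {a : α} {b : β} (hA : ∀ i ∈ A, ∀ j ∈ A, compare (f i) (f j) = compare (g i) (g j))
    (hrank : #((A.image f).filter (· < a)) = #((A.image g).filter (· < b)))
    (hmem : a ∈ A.image f ↔ b ∈ A.image g) :
    ∀ i ∈ A, compare (f i) a = compare (g i) b := by
  intro i hi
  have hrank_i : #((A.image f).filter (· < f i)) = #((A.image g).filter (· < g i)) :=
    card_filter_lt_image_eq (fun j hj k hk => by simp_rw [← compare_eq_iff_eq, hA j hj k hk])
      fun j hj => by simp_rw [← compare_lt_iff_lt, hA j hj i hi]
  apply compare_eq_compare_of_iff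
  · rw [lt_iff_card_filter_lt_lt (mem_image_of_mem f hi),
      lt_iff_card_filter_lt_lt (mem_image_of_mem g hi), hrank_i, hrank]
  · rw [eq_iff_mem_and_card_filter_lt_eq (mem_image_of_mem f hi),
      eq_iff_mem_and_card_filter_lt_eq (mem_image_of_mem g hi), hrank_i, hrank, hmem]

theorem forall_compare_cons_eq {n : ℕ} {s : Fin n → α} {s' : Fin n → β} {x : α} {x' : β}
    (hs : ∀ i j, compare (s i) (s j) = compare (s' i) (s' j))
    (hx : ∀ i, compare (s i) x = compare (s' i) x') (i j : Fin (n + 1)) :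
    compare ((Fin.cons x s : Fin (n + 1) → α) i) ((Fin.cons x s : Fin (n + 1) → α) j) =
      compare ((Fin.cons x' s' : Fin (n + 1) → β) i) ((Fin.cons x' s' : Fin (n + 1) → β) j) := by
  cases i using Fin.cases <;> cases j using Fin.cases
  · simp
  · simp only [Fin.cons_zero, Fin.cons_succ]
    rw [Std.OrientedOrd.eq_swap, hx, ← Std.OrientedOrd.eq_swap]
  · simpa using hx _
  · simpa using hs _ _

end LinearOrder

theorem Nat.cast_add_ite_half_inj {d d' : ℕ} {o o' : Prop} [Decidable o] [Decidable o']
    (h : (d : ℚ) + (if o then 1 else 1 / 2) = d' + (if o' then 1 else 1 / 2)) :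
    d = d' ∧ (o ↔ o') := by
  have h2 : ((2 * d + if o then 2 else 1 : ℕ) : ℚ) = ((2 * d' + if o' then 2 else 1 : ℕ) : ℚ) := by
    push_cast
    split_ifs at h ⊢ <;> linarith
  have h3 := Nat.cast_injective h2
  split_ifs at h3 <;> first | exact ⟨by omega, by tauto⟩ | omega

section RankEncode

variable {m : ℕ} {α β : Type*} [LinearOrder α] [LinearOrder β] {s : Fin m → α} {s' : Fin m → β}

theorem compare_eq_compare_of_rankEncode_eq (h : rankEncode s = rankEncode s') (i j : Fin m) :
    compare (s i) (s j) = compare (s' i) (s' j) := by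
  suffices H : ∀ i j : Fin m, j < i → compare (s j) (s i) = compare (s' j) (s' i) from
    compare_eq_compare_of_forall_lt (A := univ) (fun i _ j _ => H i j) i (mem_univ i) j
      (mem_univ j)
  intro i
  induction i using WellFoundedLT.induction with
  | _ i ih =>
    set A := univ.filter fun j : Fin m => (j : ℕ) < i
    have hA : ∀ k ∈ A, ∀ j ∈ A, compare (s k) (s j) = compare (s' k) (s' j) :=
      compare_eq_compare_of_forall_lt fun k hk j _ hjk => ih k (mem_filter.1 hk).2 j hjk
    obtain ⟨hrank, hocc⟩ := Nat.cast_add_ite_half_inj (congrFun h i)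
    intro j hj
    exact compare_eq_compare_of_card_filter_lt_eq hA hrank (by simpa [A] using hocc) j
      (by simpa [A] using hj)

theorem rankEncode_eq_of_compare_eq (h : ∀ i j, compare (s i) (s j) = compare (s' i) (s' j)) :
    rankEncode s = rankEncode s' := by
  have heq : ∀ j k, s j = s k ↔ s' j = s' k := fun j k => by simp_rw [← compare_eq_iff_eq, h]
  funext i
  unfold rankEncode
  congr 1
  · exact_mod_cast card_filter_lt_image_eq (fun j _ k _ => heq j k) fun j _ => by
      simp_rw [← compare_lt_iff_lt, h]
  · exact if_congr (exists_congr fun j => and_congr_right' (heq j i)) rfl rfl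

theorem rankEncode_eq_iff :
    rankEncode s = rankEncode s' ↔ ∀ i j, compare (s i) (s j) = compare (s' i) (s' j) :=
  ⟨compare_eq_compare_of_rankEncode_eq, rankEncode_eq_of_compare_eq⟩

end RankEncode

open Classical in
/-- If `T` and `T'` have equal rank encodings, and the new characters `x` and `x'` have
the same rank information among the values of `T` and `T'` respectively (same number of
distinct smaller values, and occurring iff the other occurs), then prepending them yields
equal rank encodings. -/
theorem rankEncode_cons {L : ℕ} {α β : Type*} [LinearOrder α] [LinearOrder β]
    (T : Fin L → α) (T' : Fin L → β) (x : α) (x' : β)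
    (hE : rankEncode T = rankEncode T')
    (hrank : (((Finset.univ : Finset (Fin L)).image T).filter (fun a => a < x)).card =
      (((Finset.univ : Finset (Fin L)).image T').filter (fun b => b < x')).card)
    (hocc : (∃ i : Fin L, T i = x) ↔ (∃ i : Fin L, T' i = x')) :
    rankEncode (Fin.cons x T : Fin (L + 1) → α) =
      rankEncode (Fin.cons x' T' : Fin (L + 1) → β) := by
  rw [rankEncode_eq_iff] at hE ⊢
  exact forall_compare_cons_eq hE fun i =>
    compare_eq_compare_of_card_filter_lt_eq (A := univ) (fun i _ j _ => hE i j) hrank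
      (by simpa using hocc) i (mem_univ i)
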